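/- arXiv:2102.02056 — 3 statements merged into one kernel-verified Lean document; each statement's English description precedes it below -/
import Mathlib

section
/- Let h be a descriptive proximal conjugacy between f and g. If A is an eventual descriptively fixed subset of f (i.e., Φ₁(f(A)) ≠ Φ₁(A) but Φ₁(fⁿ(A)) = Φ₁(A) for some n > 1), then h(A) is an eventual descriptively fixed subset of g. -/
theorem image_iterate_image_eq_iff_of_descriptive_conjugacy
    {X Y Z₁ Z₂ : Type*} {Φ₁ : X → Z₁} {Φ₂ : Y → Z₂} {f : X → X} {g : Y → Y} {h : X → Y}
    (hiff : ∀ A B : Set X, Φ₁ '' A = Φ₁ '' B ↔ Φ₂ '' (h '' A) = Φ₂ '' (h '' B))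
    (hiter : ∀ (A : Set X) (n : ℕ), Φ₂ '' (h '' (f^[n] '' A)) = Φ₂ '' (g^[n] '' (h '' A)))
    (A : Set X) (n : ℕ) :
    Φ₂ '' (g^[n] '' (h '' A)) = Φ₂ '' (h '' A) ↔ Φ₁ '' (f^[n] '' A) = Φ₁ '' A := by
  rw [← hiter, hiff]

theorem descriptive_conjugacy_eventual_fixed_subset_general
    {X Y : Type*} {m : ℕ}
    (Φ₁ : X → (Fin m → ℝ)) (Φ₂ : Y → (Fin m → ℝ))
    (f : X → X) (g : Y → Y) (h : X → Y)
    (hiff : ∀ A B : Set X, Φ₁ '' A = Φ₁ '' B ↔ Φ₂ '' (h '' A) = Φ₂ '' (h '' B))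
    (hiter : ∀ (A : Set X) (n : ℕ),
      Φ₂ '' (h '' (f^[n] '' A)) = Φ₂ '' (g^[n] '' (h '' A)))
    (A : Set X)
    (hA : Φ₁ '' (f '' A) ≠ Φ₁ '' A ∧ ∃ n : ℕ, 1 < n ∧ Φ₁ '' (f^[n] '' A) = Φ₁ '' A) :
    Φ₂ '' (g '' (h '' A)) ≠ Φ₂ '' (h '' A) ∧
      ∃ n : ℕ, 1 < n ∧ Φ₂ '' (g^[n] '' (h '' A)) = Φ₂ '' (h '' A) := by
  obtain ⟨hnot_fixed, n, hn, hperiodic⟩ := hA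
  have htransfer := image_iterate_image_eq_iff_of_descriptive_conjugacy hiff hiter A
  refine ⟨fun hfixed => hnot_fixed ?_, n, hn, (htransfer n).2 hperiodic⟩
  simpa only [Function.iterate_one] using (htransfer 1).1 (by simpa only [Function.iterate_one])

theorem descriptive_conjugacy_eventual_fixed_subset
    {X Y : Type*} {m : ℕ}
    (Φ₁ : X → (Fin m → ℝ)) (Φ₂ : Y → (Fin m → ℝ))
    (f : X → X) (g : Y → Y) (h : X → Y)
    (hbij : Function.Bijective h)
    (hiff : ∀ A B : Set X, Φ₁ '' A = Φ₁ '' B ↔ Φ₂ '' (h '' A) = Φ₂ '' (h '' B))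
    (hconj : ∀ A : Set X, Φ₂ '' (g '' (h '' A)) = Φ₂ '' (h '' (f '' A)))
    (hiter : ∀ (A : Set X) (n : ℕ),
      Φ₂ '' (h '' (f^[n] '' A)) = Φ₂ '' (g^[n] '' (h '' A)))
    (A : Set X)
    (hA : Φ₁ '' (f '' A) ≠ Φ₁ '' A ∧ ∃ n : ℕ, 1 < n ∧ Φ₁ '' (f^[n] '' A) = Φ₁ '' A) :
    Φ₂ '' (g '' (h '' A)) ≠ Φ₂ '' (h '' A) ∧
      ∃ n : ℕ, 1 < n ∧ Φ₂ '' (g^[n] '' (h '' A)) = Φ₂ '' (h '' A) :=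
  descriptive_conjugacy_eventual_fixed_subset_general Φ₁ Φ₂ f g h hiff hiter A hA
end

section
/- Let h be a descriptive proximal conjugacy between f and g. If A is an almost descriptively fixed subset of f (i.e., either f(A) =_des A or A δ_{Φ₁} f(A)), then h(A) is an almost descriptively fixed subset of g. -/
theorem exists_mem_eq_of_image_eq_right {α β γ : Type*} {Φ : α → γ} {Ψ : β → γ}
    {A : Set α} {B C : Set β} (hBC : Ψ '' B = Ψ '' C)
    (hnear : ∃ x ∈ A, ∃ y ∈ B, Φ x = Ψ y) : ∃ x ∈ A, ∃ z ∈ C, Φ x = Ψ z := by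
  obtain ⟨x, hx, y, hy, hxy⟩ := hnear
  obtain ⟨z, hz, hzy⟩ : Ψ y ∈ Ψ '' C := hBC ▸ Set.mem_image_of_mem Ψ hy
  exact ⟨x, hx, z, hz, hxy.trans hzy.symm⟩

theorem descriptive_conjugacy_almost_fixed_subset_general
    {X Y : Type*} {m : ℕ}
    (Φ₁ : X → (Fin m → ℝ)) (Φ₂ : Y → (Fin m → ℝ))
    (f : X → X) (g : Y → Y) (h : X → Y)
    (hhpres : ∀ A B : Set X, Φ₁ '' A = Φ₁ '' B → Φ₂ '' (h '' A) = Φ₂ '' (h '' B))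
    (hhδ : ∀ A B : Set X, (∃ x ∈ A, ∃ y ∈ B, Φ₁ x = Φ₁ y) →
      ∃ x ∈ h '' A, ∃ y ∈ h '' B, Φ₂ x = Φ₂ y)
    (hconj : ∀ A : Set X, Φ₂ '' (g '' (h '' A)) = Φ₂ '' (h '' (f '' A)))
    (A : Set X)
    (hA : Φ₁ '' (f '' A) = Φ₁ '' A ∨ ∃ x ∈ A, ∃ y ∈ f '' A, Φ₁ x = Φ₁ y) :
    Φ₂ '' (g '' (h '' A)) = Φ₂ '' (h '' A) ∨
      ∃ x ∈ h '' A, ∃ y ∈ g '' (h '' A), Φ₂ x = Φ₂ y := by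
  rcases hA with hfixed | hnear
  · exact Or.inl ((hconj A).trans (hhpres _ _ hfixed))
  · exact Or.inr (exists_mem_eq_of_image_eq_right (hconj A).symm (hhδ A (f '' A) hnear))

theorem descriptive_conjugacy_almost_fixed_subset
    {X Y : Type*} {m : ℕ}
    (Φ₁ : X → (Fin m → ℝ)) (Φ₂ : Y → (Fin m → ℝ))
    (f : X → X) (g : Y → Y) (h : X → Y)
    (hbij : Function.Bijective h)
    (hhpres : ∀ A B : Set X, Φ₁ '' A = Φ₁ '' B → Φ₂ '' (h '' A) = Φ₂ '' (h '' B))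
    (hhδ : ∀ A B : Set X, (∃ x ∈ A, ∃ y ∈ B, Φ₁ x = Φ₁ y) →
      ∃ x ∈ h '' A, ∃ y ∈ h '' B, Φ₂ x = Φ₂ y)
    (hconj : ∀ A : Set X, Φ₂ '' (g '' (h '' A)) = Φ₂ '' (h '' (f '' A)))
    (A : Set X)
    (hA : Φ₁ '' (f '' A) = Φ₁ '' A ∨ ∃ x ∈ A, ∃ y ∈ f '' A, Φ₁ x = Φ₁ y) :
    Φ₂ '' (g '' (h '' A)) = Φ₂ '' (h '' A) ∨
      ∃ x ∈ h '' A, ∃ y ∈ g '' (h '' A), Φ₂ x = Φ₂ y :=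
  descriptive_conjugacy_almost_fixed_subset_general Φ₁ Φ₂ f g h hhpres hhδ hconj A hA
end

section
/- Let F be a commuting family of continuous affine self-maps of a nonempty compact convex subset K of ℝⁿ. Then there is a common fixed point: some x ∈ K with f(x) = x for every f ∈ F. -/
/-!
For a single map `f`, the Cesàro means `c_N = (x + f x + ⋯ + f^[N-1] x) / N` lie in `K` and, by
affineness, satisfy `f c_N - c_N = (f^[N] x - x) / N`, which is at most `diam K / N` in norm; so the
continuous displacement `dist (f x) x` attains the minimum `0` on the compact set `K`.
For a commuting family, the fixed points of one map in `K` again form a nonempty compact convex set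
mapped into itself by the other maps. Induction gives common fixed points for finite subfamilies,
and the finite intersection property of compact sets handles the whole family.
-/

open Finset Set Function Filter

section Affine

variable {E F : Type*} [AddCommGroup E] [Module ℝ E] [AddCommGroup F] [Module ℝ F]

def AffineOn (s : Set E) (f : E → F) : Prop :=
  ∀ x ∈ s, ∀ y ∈ s, ∀ t : ℝ, t ∈ Icc (0 : ℝ) 1 →
    f (t • x + (1 - t) • y) = t • f x + (1 - t) • f y

noncomputable def cesaroMean (N : ℕ) (p : ℕ → E) : E :=
  (N : ℝ)⁻¹ • ∑ k ∈ range N, p k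

variable {s t : Set E} {f : E → F}

theorem AffineOn.mono (hf : AffineOn s f) (hts : t ⊆ s) : AffineOn t f :=
  fun x hx y hy => hf x (hts hx) y (hts hy)

theorem Convex.cesaroMean_mem (hs : Convex ℝ s) {p : ℕ → E} (hp : ∀ k, p k ∈ s) {N : ℕ}
    (hN : N ≠ 0) : cesaroMean N p ∈ s := by
  rw [cesaroMean, smul_sum]
  refine hs.sum_mem (fun _ _ => by positivity) ?_ fun k _ => hp k
  rw [sum_const, card_range, nsmul_eq_mul, mul_inv_cancel₀ (Nat.cast_ne_zero.2 hN)]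

theorem cesaroMean_succ (p : ℕ → E) {N : ℕ} (hN : N ≠ 0) :
    cesaroMean (N + 1) p =
      (N / (N + 1) : ℝ) • cesaroMean N p + (1 - N / (N + 1) : ℝ) • p N := by
  have hN' : (N : ℝ) ≠ 0 := Nat.cast_ne_zero.2 hN
  rw [cesaroMean, cesaroMean, sum_range_succ, smul_add, smul_smul, Nat.cast_succ]
  congr 2
  · field_simp
  · field_simp; ring

theorem AffineOn.map_cesaroMean (hf : AffineOn s f) (hs : Convex ℝ s) {p : ℕ → E}
    (hp : ∀ k, p k ∈ s) {N : ℕ} (hN : N ≠ 0) :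
    f (cesaroMean N p) = cesaroMean N (f ∘ p) := by
  induction N with
  | zero => exact absurd rfl hN
  | succ N ih =>
    rcases eq_or_ne N 0 with rfl | hN
    · simp [cesaroMean]
    have ht : (N / (N + 1) : ℝ) ∈ Icc (0 : ℝ) 1 :=
      ⟨by positivity, div_le_one_of_le₀ (by linarith) (by positivity)⟩
    rw [cesaroMean_succ p hN, cesaroMean_succ (f ∘ p) hN,
      hf _ (hs.cesaroMean_mem hp hN) _ (hp N) _ ht, ih hN, comp_apply]

theorem Convex.inter_fixedPoints {g : E → E} (hs : Convex ℝ s) (hg : AffineOn s g) :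
    Convex ℝ (s ∩ fixedPoints g) := by
  rintro x ⟨hxs, hx⟩ y ⟨hys, hy⟩ a b ha hb hab
  obtain rfl := eq_sub_of_add_eq' hab
  refine ⟨hs hxs hys ha hb hab, ?_⟩
  show g _ = _
  rw [hg x hxs y hys a ⟨ha, by linarith⟩, hx.eq, hy.eq]

end Affine

theorem IsCompact.inter_fixedPoints {X : Type*} [TopologicalSpace X] [T2Space X] {K : Set X}
    {f : X → X} (hK : IsCompact K) (hf : ContinuousOn f K) : IsCompact (K ∩ fixedPoints f) :=
  hK.of_isClosed_subset
    ((hf.prodMk continuousOn_id).preimage_isClosed_of_isClosed hK.isClosed isClosed_diagonal)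
    inter_subset_left

theorem Set.MapsTo.inter_fixedPoints {X : Type*} {K : Set X} {f g : X → X}
    (hg : MapsTo g K K) (hcomm : ∀ x ∈ K, g (f x) = f (g x)) :
    MapsTo g (K ∩ fixedPoints f) (K ∩ fixedPoints f) :=
  fun x ⟨hxK, hx⟩ => ⟨hg hxK, (hcomm x hxK).symm.trans (congrArg g hx)⟩

section FixedPoint

variable {E : Type*} [NormedAddCommGroup E] [NormedSpace ℝ E] {K : Set E} {f : E → E}

theorem dist_map_cesaroMean_iterate_le (hK : Convex ℝ K) (hKb : Bornology.IsBounded K)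
    (hmaps : MapsTo f K K) (haff : AffineOn K f) {x : E} (hx : x ∈ K) {N : ℕ} (hN : N ≠ 0) :
    dist (f (cesaroMean N (f^[·] x))) (cesaroMean N (f^[·] x)) ≤ Metric.diam K / N := by
  have hiter : ∀ k, f^[k] x ∈ K := fun k => hmaps.iterate k hx
  have hshift : f (cesaroMean N (f^[·] x)) = cesaroMean N (f^[· + 1] x) := by
    rw [haff.map_cesaroMean hK hiter hN]
    congr 1
    ext k
    exact (iterate_succ_apply' f k x).symm
  rw [hshift, dist_eq_norm, cesaroMean, cesaroMean, ← smul_sub, ← sum_sub_distrib,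
    sum_range_sub (f^[·] x), norm_smul, norm_inv, RCLike.norm_natCast, iterate_zero_apply,
    ← dist_eq_norm, div_eq_inv_mul]
  exact mul_le_mul_of_nonneg_left (Metric.dist_le_diam_of_mem hKb (hiter N) hx) (by positivity)

theorem exists_fixedPoint_of_affineOn (hKne : K.Nonempty) (hKc : IsCompact K)
    (hK : Convex ℝ K) (hmaps : MapsTo f K K) (hcont : ContinuousOn f K) (haff : AffineOn K f) :
    ∃ x ∈ K, IsFixedPt f x := by
  obtain ⟨x, hx, hmin⟩ := hKc.exists_isMinOn hKne
    (continuous_dist.comp_continuousOn (hcont.prodMk continuousOn_id))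
  refine ⟨x, hx, dist_le_zero.1 <|
    ge_of_tendsto (tendsto_const_div_atTop_nhds_zero_nat (Metric.diam K)) ?_⟩
  filter_upwards [eventually_ne_atTop 0] with N hN
  exact (hmin (hK.cesaroMean_mem (fun k => hmaps.iterate k hx) hN)).trans
    (dist_map_cesaroMean_iterate_le hK hKc.isBounded hmaps haff hx hN)

end FixedPoint

section CommonFixedPoint

variable {E ι : Type*} [NormedAddCommGroup E] [NormedSpace ℝ E] {K : Set E} {f : ι → E → E}

theorem exists_common_fixedPoint_of_finset (s : Finset ι) (hKne : K.Nonempty)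
    (hKc : IsCompact K) (hK : Convex ℝ K) (hmaps : ∀ i ∈ s, MapsTo (f i) K K)
    (hcont : ∀ i ∈ s, ContinuousOn (f i) K) (haff : ∀ i ∈ s, AffineOn K (f i))
    (hcomm : ∀ i ∈ s, ∀ j ∈ s, ∀ x ∈ K, f i (f j x) = f j (f i x)) :
    ∃ x ∈ K, ∀ i ∈ s, IsFixedPt (f i) x := by
  induction s using Finset.cons_induction generalizing K with
  | empty => exact hKne.imp fun x hx => ⟨hx, by simp⟩
  | cons a s _ ih =>
    simp only [forall_mem_cons] at hmaps hcont haff hcomm ⊢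
    obtain ⟨x, hx, hfix⟩ := ih (K := K ∩ fixedPoints (f a))
      (exists_fixedPoint_of_affineOn hKne hKc hK hmaps.1 hcont.1 haff.1)
      (hKc.inter_fixedPoints hcont.1) (hK.inter_fixedPoints haff.1)
      (fun i hi => (hmaps.2 i hi).inter_fixedPoints fun x hx => (hcomm.1.2 i hi x hx).symm)
      (fun i hi => (hcont.2 i hi).mono inter_subset_left)
      (fun i hi => (haff.2 i hi).mono inter_subset_left)
      (fun i hi j hj x hx => (hcomm.2 i hi).2 j hj x hx.1)
    exact ⟨x, hx.1, hx.2, hfix⟩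

theorem exists_common_fixedPoint (hKne : K.Nonempty) (hKc : IsCompact K) (hK : Convex ℝ K)
    (hmaps : ∀ i, MapsTo (f i) K K) (hcont : ∀ i, ContinuousOn (f i) K)
    (haff : ∀ i, AffineOn K (f i)) (hcomm : ∀ i j, ∀ x ∈ K, f i (f j x) = f j (f i x)) :
    ∃ x ∈ K, ∀ i, IsFixedPt (f i) x := by
  obtain ⟨x, hx, hfix⟩ := hKc.inter_iInter_nonempty (fun i => K ∩ fixedPoints (f i))
    (fun i => (hKc.inter_fixedPoints (hcont i)).isClosed) fun s => by
      obtain ⟨x, hx, hfix⟩ := exists_common_fixedPoint_of_finset s hKne hKc hK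
        (fun i _ => hmaps i) (fun i _ => hcont i) (fun i _ => haff i)
        (fun i _ j _ => hcomm i j)
      exact ⟨x, hx, mem_iInter₂.2 fun i hi => ⟨hx, hfix i hi⟩⟩
  exact ⟨x, hx, fun i => (mem_iInter.1 hfix i).2⟩

end CommonFixedPoint

theorem kakutani_markov_finite_dim
    {n : ℕ} (K : Set (Fin n → ℝ)) (hne : K.Nonempty) (hK : IsCompact K)
    (hconv : Convex ℝ K) (F : Set ((Fin n → ℝ) → (Fin n → ℝ)))
    (hmaps : ∀ f ∈ F, Set.MapsTo f K K)
    (hcont : ∀ f ∈ F, ContinuousOn f K)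
    (haff : ∀ f ∈ F, ∀ x ∈ K, ∀ y ∈ K, ∀ t : ℝ, t ∈ Set.Icc (0:ℝ) 1 →
      f (t • x + (1 - t) • y) = t • f x + (1 - t) • f y)
    (hcomm : ∀ f ∈ F, ∀ g ∈ F, ∀ x ∈ K, f (g x) = g (f x)) :
    ∃ x ∈ K, ∀ f ∈ F, f x = x := by
  obtain ⟨x, hx, hfix⟩ :=
    exists_common_fixedPoint (f := ((↑) : F → (Fin n → ℝ) → Fin n → ℝ)) hne hK hconv
    (fun f => hmaps f f.2) (fun f => hcont f f.2) (fun f => haff f f.2)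
    (fun f g => hcomm f f.2 g g.2)
  exact ⟨x, hx, fun f hf => hfix ⟨f, hf⟩⟩
end
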